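/- arXiv:2007.06550 — 2 statements merged into one kernel-verified Lean document; each statement's English description precedes it below -/
import Mathlib

section
/- Fix a connected graph G with n ≥ 2 vertices and m edges, an orientation σ, a cycle basis ρ_1, …, ρ_c (c = m − n + 1), a noise vector ε ∈ {−1,0,1}^m, a vector x̂ = [x; f] ∈ ℤ^{m+1}, and an integer B ≥ 2. Then the number of integer vectors r with all coordinates in {−1, 0, …, B} that are bad with (σ, x̂) is at most (2B)^{n−2}. -/
open scoped BigOperators

/-- A graph on `Fin n` with `m` edges is given by the endpoint map `ends`.
An *orientation* `σ` assigns to each edge either its reference pair or the swapped pair. -/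
def IsOrientation {n m : ℕ} (ends σ : Fin m → Fin n × Fin n) : Prop :=
  ∀ e, σ e = ends e ∨ σ e = ((ends e).2, (ends e).1)

/-- The graph is simple: no loops and no parallel edges. -/
def IsSimple {n m : ℕ} (ends : Fin m → Fin n × Fin n) : Prop :=
  (∀ e, (ends e).1 ≠ (ends e).2) ∧
    ∀ e e', (ends e = ends e' ∨ ends e = ((ends e').2, (ends e').1)) → e = e'

/-- The graph is connected. -/
def IsConn {n m : ℕ} (ends : Fin m → Fin n × Fin n) : Prop :=
  ∀ a b : Fin n,
    Relation.ReflTransGen (fun u v => ∃ e, ends e = (u, v) ∨ ends e = (v, u)) a b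

/-- The configuration orientation `σ_p`: edge `{i,j}` is oriented `(i,j)` if `p i < p j`,
and `(j,i)` otherwise. -/
def configOrient {n m : ℕ} (ends : Fin m → Fin n × Fin n) {α : Type*} [LinearOrder α]
    (p : Fin n → α) : Fin m → Fin n × Fin n :=
  fun e => if p (ends e).1 < p (ends e).2 then ends e else ((ends e).2, (ends e).1)

/-- The oriented measurement map `ℓ_σ`: the entry for an edge oriented `(i,j)` is `p j - p i`. -/
def omeas {n m : ℕ} (σ : Fin m → Fin n × Fin n) {R : Type*} [Ring R] (p : Fin n → R) :
    Fin m → R :=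
  fun e => p (σ e).2 - p (σ e).1

/-- The measurement map `ℓ`: the entry for edge `{i,j}` is `|p j - p i|`. -/
def meas {n m : ℕ} (ends : Fin m → Fin n × Fin n) {R : Type*} [Ring R] [LinearOrder R]
    [IsStrictOrderedRing R]
    (p : Fin n → R) : Fin m → R :=
  fun e => |p (ends e).2 - p (ends e).1|

/-- The signed edge incidence matrix `M^σ(G)`: the row of an edge oriented `(i,j)` has
entry `-1` in column `i`, `+1` in column `j`, and `0` elsewhere. -/
def inc {n m : ℕ} (σ : Fin m → Fin n × Fin n) : Matrix (Fin m) (Fin n) ℝ :=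
  Matrix.of fun e u => if u = (σ e).2 then 1 else if u = (σ e).1 then -1 else 0

/-- A simple cycle in the graph `ends`: a cyclic sequence of `k ≥ 3` distinct vertices,
consecutive ones joined by distinct edges of the graph. -/
structure SimpleCycle {n m : ℕ} (ends : Fin m → Fin n × Fin n) where
  k : ℕ
  hk : 3 ≤ k
  v : ZMod k → Fin n
  hv : Function.Injective v
  edge : ZMod k → Fin m
  hedge : Function.Injective edge
  hends : ∀ i : ZMod k,
    ends (edge i) = (v i, v (i + 1)) ∨ ends (edge i) = (v (i + 1), v i)

open Classical in
/-- The signed cycle vector `w_{ρ,σ}` of a simple cycle `ρ` with respect to an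
orientation `σ`: `0` off the cycle, `+1` on edges whose `σ`-orientation agrees with
the traversal, `-1` on those that disagree. -/
noncomputable def cycVec {n m : ℕ} {ends : Fin m → Fin n × Fin n} (ρ : SimpleCycle ends)
    (σ : Fin m → Fin n × Fin n) : Fin m → ℤ := fun e =>
  if h : ∃ i, ρ.edge i = e then
    (if σ e = (ρ.v h.choose, ρ.v (h.choose + 1)) then 1 else -1)
  else 0

/-- The `e`-th column of the `(m+1) × m` matrix `[I_m ; rᵀ]`. -/
def latCol {m : ℕ} (r : Fin m → ℤ) (e : Fin m) : Fin (m + 1) → ℤ :=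
  Fin.snoc (fun e' => if e' = e then 1 else 0) (r e)

/-- The lattice `LatZ(r) ⊆ ℤ^{m+1}`: integer span of the columns of `[I_m ; rᵀ]`. -/
def LatZ {m : ℕ} (r : Fin m → ℤ) : Submodule ℤ (Fin (m + 1) → ℤ) :=
  Submodule.span ℤ (Set.range (latCol r))

/-- The Euclidean norm of an integer vector. -/
noncomputable def norm2 {d : ℕ} (y : Fin d → ℤ) : ℝ :=
  Real.sqrt (∑ j, ((y j : ℝ)) ^ 2)

/-- The hatted cycle vector `ŵ_{ρ,σ} = [w_{ρ,σ} ; εᵀ w_{ρ,σ}]`. -/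
noncomputable def hatCycVec {n m : ℕ} {ends : Fin m → Fin n × Fin n} (ρ : SimpleCycle ends)
    (σ : Fin m → Fin n × Fin n) (ε : Fin m → ℤ) : Fin (m + 1) → ℤ :=
  Fin.snoc (cycVec ρ σ) (∑ e, ε e * cycVec ρ σ e)

/-- A vector with all entries in `{-1, 0, 1}`. -/
def SmallVec {m : ℕ} (ε : Fin m → ℤ) : Prop := ∀ e, ε e = -1 ∨ ε e = 0 ∨ ε e = 1

/-- Cast an integer vector to a real vector. -/
def castR {d : ℕ} (y : Fin d → ℤ) : Fin d → ℝ := fun j => (y j : ℝ)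

/-- `r` is *bad* with `(σ, x̂)` (relative to the cycle basis `ρs` and noise `ε`):
`x̂` is linearly independent of the hatted cycle vectors, and `x̂` together with all the
hatted cycle vectors lie in `LatZ r`. -/
noncomputable def BadWith {n m c : ℕ} {ends : Fin m → Fin n × Fin n}
    (ρs : Fin c → SimpleCycle ends) (σ : Fin m → Fin n × Fin n) (ε : Fin m → ℤ)
    (xhat : Fin (m + 1) → ℤ) (r : Fin m → ℤ) : Prop :=
  castR xhat ∉ Submodule.span ℝ (Set.range fun i => castR (hatCycVec (ρs i) σ ε)) ∧
    xhat ∈ LatZ r ∧ ∀ i, hatCycVec (ρs i) σ ε ∈ LatZ r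

/-- `p` is *sad* with `(σ, x̂)`: `r := ℓ_σ(p) + ε` has all coordinates in `{-1, 0, …, B}`
and `r` is bad with `(σ, x̂)`. -/
noncomputable def SadWith {n m c : ℕ} {ends : Fin m → Fin n × Fin n}
    (ρs : Fin c → SimpleCycle ends) (σ : Fin m → Fin n × Fin n) (ε : Fin m → ℤ)
    (xhat : Fin (m + 1) → ℤ) (B : ℕ) (p : Fin n → ℤ) : Prop :=
  (∀ e, -1 ≤ omeas σ p e + ε e ∧ omeas σ p e + ε e ≤ (B : ℤ)) ∧
    BadWith ρs σ ε xhat (fun e => omeas σ p e + ε e)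

/-!
Reading off the last coordinate of `LatZ r`, a bad `r` satisfies the `c + 1` linear equations
`rᵀx = f` and `rᵀw_i = εᵀw_i`. If some bad `r₀` exists, then `x` is independent of the `w_i`:
otherwise `x̂` would be the same combination of the `ŵ_i`, since `u ↦ [u ; r₀ᵀu]` is linear and
sends `x` to `x̂` and `w_i` to `ŵ_i`. So all bad `r` lie on an affine subspace of codimension
`c + 1`. Completing `x, w_1, …, w_c` by `m - c - 1 ≤ n - 2` standard basis vectors to a spanning
family shows that such an `r` is determined by its entries at those coordinates, each of which
takes one of `B + 2 ≤ 2B` values.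
-/

open Finset

theorem LinearIndependent.exists_finset_span_range_union_basisFun_eq_top {K ι : Type*} [Field K]
    [Fintype ι] {m : ℕ} {v : ι → Fin m → K} (hv : LinearIndependent K v) :
    ∃ S : Finset (Fin m), #S = m - Fintype.card ι ∧
      Submodule.span K (Set.range v ∪ Pi.basisFun K (Fin m) '' S) = ⊤ := by
  classical
  set s := Set.range v
  have hs : LinearIndepOn K id s := hv.linearIndepOn_id
  have hst : s ⊆ s ∪ Set.range (Pi.basisFun K (Fin m)) := Set.subset_union_left
  set b := hs.extend hst
  set S := univ.filter fun e => Pi.basisFun K (Fin m) e ∈ b \ s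
  have hb : s ∪ Pi.basisFun K (Fin m) '' S = b := by
    apply subset_antisymm
    · refine Set.union_subset (hs.subset_extend hst) ?_
      rintro _ ⟨e, he, rfl⟩
      exact (mem_filter.1 he).2.1
    · intro u hu
      by_cases hus : u ∈ s
      · exact Or.inl hus
      · obtain hut | ⟨e, rfl⟩ := hs.extend_subset hst hu
        · exact absurd hut hus
        · exact Or.inr ⟨e, mem_filter.2 ⟨mem_univ e, hu, hus⟩, rfl⟩
  have hspan : Submodule.span K b = ⊤ := by
    rw [hs.span_extend_eq_span, eq_top_iff, ← (Pi.basisFun K (Fin m)).span_eq]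
    exact Submodule.span_mono Set.subset_union_right
  have hbcard : b.ncard = m := by
    have : Fintype b := (Set.toFinite b).fintype
    have h := finrank_span_set_eq_card (hs.linearIndepOn_extend hst)
    rw [hspan, finrank_top, Module.finrank_fin_fun] at h
    rw [Set.ncard_eq_toFinset_card' b]
    exact h.symm
  have hdisj : Disjoint s (Pi.basisFun K (Fin m) '' S) := by
    rw [Set.disjoint_right]
    rintro _ ⟨e, he, rfl⟩
    exact (mem_filter.1 he).2.2
  rw [← hb, Set.ncard_union_eq hdisj, Set.ncard_range_of_injective hv.injective,
    Set.ncard_image_of_injective _ (Pi.basisFun K (Fin m)).injective, Set.ncard_coe_finset,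
    Nat.card_eq_fintype_card] at hbcard
  exact ⟨S, by omega, by rw [hb, hspan]⟩

theorem eq_zero_of_dotProduct_eq_zero_of_span_eq_top {K : Type*} [Field K] {m : ℕ}
    {s : Set (Fin m → K)} (hs : Submodule.span K s = ⊤) {d : Fin m → K}
    (hd : ∀ u ∈ s, d ⬝ᵥ u = 0) : d = 0 := by
  have h : dotProductEquiv K (Fin m) d = 0 := LinearMap.ext_on hs fun u hu => hd u hu
  simpa using h

theorem natCard_le_pow_of_linearIndependent {ι : Type*} [Fintype ι] {m : ℕ}
    {v : ι → Fin m → ℝ} (hv : LinearIndependent ℝ v) (c : ι → ℝ) (A : Finset ℤ)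
    (T : Set (Fin m → ℤ)) (hTA : ∀ r ∈ T, ∀ e, r e ∈ A)
    (hTc : ∀ r ∈ T, ∀ i, castR r ⬝ᵥ v i = c i) :
    Nat.card T ≤ #A ^ (m - Fintype.card ι) := by
  obtain ⟨S, hS, hspan⟩ := hv.exists_finset_span_range_union_basisFun_eq_top
  let restrict : T → S → A := fun r e => ⟨r.1 e, hTA r r.2 e⟩
  have hinj : Function.Injective restrict := by
    rintro ⟨r, hr⟩ ⟨r', hr'⟩ h
    have hd : castR r - castR r' = 0 := by
      refine eq_zero_of_dotProduct_eq_zero_of_span_eq_top hspan ?_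
      rintro _ (⟨i, rfl⟩ | ⟨e, he, rfl⟩)
      · rw [sub_dotProduct, hTc r hr, hTc r' hr', sub_self]
      · have hre : r e = r' e := congrArg Subtype.val (congrFun h ⟨e, he⟩)
        simp [castR, hre]
    ext e
    simpa [castR, sub_eq_zero] using congrFun hd e
  calc Nat.card T ≤ Nat.card (S → A) := Nat.card_le_card_of_injective restrict hinj
    _ = #A ^ (m - Fintype.card ι) := by simp [hS]

theorem castR_dotProduct_castR {m : ℕ} (r y : Fin m → ℤ) :
    castR r ⬝ᵥ castR y = ((r ⬝ᵥ y : ℤ) : ℝ) :=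
  ((Int.castRingHom ℝ).map_dotProduct r y).symm

theorem last_eq_dotProduct_init_of_mem_LatZ {m : ℕ} {r : Fin m → ℤ} {y : Fin (m + 1) → ℤ}
    (hy : y ∈ LatZ r) : y (Fin.last m) = r ⬝ᵥ Fin.init y := by
  induction hy using Submodule.span_induction with
  | mem _ h =>
    obtain ⟨e, rfl⟩ := h
    simp [latCol, Fin.init, dotProduct]
  | zero => simp [dotProduct, Fin.init]
  | add y z _ _ hy hz => simp [dotProduct, Fin.init, hy, hz, mul_add, Finset.sum_add_distrib]
  | smul a y _ hy => simp [dotProduct, Fin.init, hy, Finset.mul_sum, mul_left_comm]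

def snocDotProduct {R : Type*} [CommSemiring R] {m : ℕ} (r : Fin m → R) :
    (Fin m → R) →ₗ[R] Fin (m + 1) → R where
  toFun u := Fin.snoc u (r ⬝ᵥ u)
  map_add' u w := by
    ext j
    induction j using Fin.lastCases <;> simp [dotProduct_add]
  map_smul' a u := by
    ext j
    induction j using Fin.lastCases <;> simp [dotProduct_smul]

theorem castR_eq_snocDotProduct_of_mem_LatZ {m : ℕ} {r : Fin m → ℤ} {y : Fin (m + 1) → ℤ}
    (hy : y ∈ LatZ r) : castR y = snocDotProduct (castR r) (castR (Fin.init y)) := by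
  ext j
  induction j using Fin.lastCases with
  | last =>
    simp [snocDotProduct, castR_dotProduct_castR, ← last_eq_dotProduct_init_of_mem_LatZ hy, castR]
  | cast e => simp [snocDotProduct, castR, Fin.init]

section BadWith

variable {n m c : ℕ} {ends : Fin m → Fin n × Fin n} {ρs : Fin c → SimpleCycle ends}
  {σ : Fin m → Fin n × Fin n} {ε x r : Fin m → ℤ} {f : ℤ}

theorem BadWith.dotProduct_eq (hr : BadWith ρs σ ε (Fin.snoc x f) r) :
    r ⬝ᵥ x = f ∧ ∀ i, r ⬝ᵥ cycVec (ρs i) σ = ε ⬝ᵥ cycVec (ρs i) σ := by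
  refine ⟨?_, fun i => ?_⟩
  · simpa using (last_eq_dotProduct_init_of_mem_LatZ hr.2.1).symm
  · simpa [hatCycVec, dotProduct] using (last_eq_dotProduct_init_of_mem_LatZ (hr.2.2 i)).symm

theorem BadWith.castR_notMem_span (hr : BadWith ρs σ ε (Fin.snoc x f) r) :
    castR x ∉ Submodule.span ℝ (Set.range fun i => castR (cycVec (ρs i) σ)) := by
  intro hx
  apply hr.1
  have hxhat : castR (Fin.snoc x f) = snocDotProduct (castR r) (castR x) := by
    simpa using castR_eq_snocDotProduct_of_mem_LatZ hr.2.1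
  have hw : (fun i => castR (hatCycVec (ρs i) σ ε)) =
      snocDotProduct (castR r) ∘ fun i => castR (cycVec (ρs i) σ) :=
    funext fun i => by simpa [hatCycVec] using castR_eq_snocDotProduct_of_mem_LatZ (hr.2.2 i)
  rw [hxhat, hw, Set.range_comp]
  exact Submodule.apply_mem_span_image_of_mem_span _ hx

theorem BadWith.castR_dotProduct_cons (hr : BadWith ρs σ ε (Fin.snoc x f) r) (j : Fin (c + 1)) :
    castR r ⬝ᵥ (Fin.cons (castR x) fun i => castR (cycVec (ρs i) σ) : Fin (c + 1) → Fin m → ℝ) j =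
      (Fin.cons (f : ℝ) fun i => ((ε ⬝ᵥ cycVec (ρs i) σ : ℤ) : ℝ) : Fin (c + 1) → ℝ) j := by
  obtain ⟨hrx, hrw⟩ := hr.dotProduct_eq
  induction j using Fin.cases <;> simp [castR_dotProduct_castR, hrx, hrw]

end BadWith

theorem stmt12_general (n m : ℕ) (ends : Fin m → Fin n × Fin n)
    (σ : Fin m → Fin n × Fin n)
    (ρs : Fin (m - n + 1) → SimpleCycle ends)
    (hbasis : LinearIndependent ℝ fun i => castR (cycVec (ρs i) σ))
    (ε : Fin m → ℤ) (x : Fin m → ℤ) (f : ℤ) (B : ℕ) (hB : 2 ≤ B) :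
    Nat.card {r : Fin m → ℤ //
        (∀ e, -1 ≤ r e ∧ r e ≤ (B : ℤ)) ∧ BadWith ρs σ ε (Fin.snoc x f) r} ≤
      (2 * B) ^ (n - 2) := by
  set T := {r : Fin m → ℤ | (∀ e, -1 ≤ r e ∧ r e ≤ (B : ℤ)) ∧ BadWith ρs σ ε (Fin.snoc x f) r}
  change Nat.card T ≤ _
  obtain hT | ⟨r₀, -, hr₀⟩ := T.eq_empty_or_nonempty
  · simp [hT]
  have hv := linearIndependent_finCons.2 ⟨hbasis, hr₀.castR_notMem_span⟩
  calc Nat.card T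
      ≤ #(Icc (-1 : ℤ) B) ^ (m - Fintype.card (Fin (m - n + 1 + 1))) :=
        natCard_le_pow_of_linearIndependent hv _ _ T (fun r hr e => mem_Icc.2 (hr.1 e))
          fun r hr => hr.2.castR_dotProduct_cons
    _ = (B + 2) ^ (m - (m - n + 2)) := by rw [Int.card_Icc, Fintype.card_fin]; congr 1
    _ ≤ (2 * B) ^ (n - 2) :=
        (Nat.pow_le_pow_left (by omega) _).trans (Nat.pow_le_pow_right (by omega) (by omega))

/-- the number of integer vectors `r` with coordinates in `{-1, 0, …, B}`
that are bad with `(σ, x̂)` is at most `(2B)^{n-2}`. -/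
theorem stmt12 (n m : ℕ) (hn : 2 ≤ n) (ends : Fin m → Fin n × Fin n) (hG : IsSimple ends)
    (hconn : IsConn ends) (σ : Fin m → Fin n × Fin n) (hσ : IsOrientation ends σ)
    (ρs : Fin (m - n + 1) → SimpleCycle ends)
    (hbasis : LinearIndependent ℝ fun i => castR (cycVec (ρs i) σ))
    (ε : Fin m → ℤ) (hε : SmallVec ε) (x : Fin m → ℤ) (f : ℤ) (B : ℕ) (hB : 2 ≤ B) :
    Nat.card {r : Fin m → ℤ //
        (∀ e, -1 ≤ r e ∧ r e ≤ (B : ℤ)) ∧ BadWith ρs σ ε (Fin.snoc x f) r} ≤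
      (2 * B) ^ (n - 2) :=
  stmt12_general n m ends σ ρs hbasis ε x f B hB
end

section
/- Fix a connected graph G with n ≥ 2 vertices and m edges, a cycle basis ρ_1, …, ρ_c (c = m − n + 1), a fixed noise vector ε ∈ {−1,0,1}^m, a fixed vector x̂ ∈ ℤ^{m+1}, and an integer B ≥ 2. For p chosen uniformly at random from the configurations {1, …, B}^n, the probability that x̂ ∈ Lat(ℓ(p) + ε) and x̂ is not in the real linear span of the vectors ŵ_{ρ_1}, …, ŵ_{ρ_c} (taken with respect to the configuration orientation σ_p) is at most 2^n · n! / B. -/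
open scoped BigOperators

/-!
Fix the orientation `σ = σ_p`. Writing `x` for the top part of `x̂` and `M^σ` for the matrix of
`ℓ_σ`, the condition `x̂ ∈ Lat(ℓ_σ(p) + ε)` is the single linear equation
`((M^σ)ᵀ x) · p = x̂_{m+1} - εᵀ x` in `p`. Its normal `(M^σ)ᵀ x` vanishes only if `x` lies in the
cycle space `ker (M^σ)ᵀ`; by connectivity this space has dimension `m - n + 1`, so it is spanned by
the cycle basis, and then `x = ∑ cᵢ w_{ρᵢ}` forces `x̂ = ∑ cᵢ ŵ_{ρᵢ}`. So for the configurations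
counted, the equation cuts out a genuine hyperplane, which meets `{1,…,B}^n` in at most `B^(n-1)`
points. Finally `σ_p` only depends on the sorting permutation of `p` and the pattern of ties
along it, which takes at most `n! · 2^n` values.
-/

open Finset
open scoped Matrix

namespace SimpleCycle

variable {n m : ℕ} {ends : Fin m → Fin n × Fin n} (ρ : SimpleCycle ends)

theorem v_ne_v_add_one (i : ZMod ρ.k) : ρ.v i ≠ ρ.v (i + 1) := by
  have : Fact (1 < ρ.k) := ⟨by have := ρ.hk; omega⟩
  intro h
  exact one_ne_zero (left_eq_add.mp (ρ.hv h))

theorem cycVec_edge (σ : Fin m → Fin n × Fin n) (i : ZMod ρ.k) :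
    cycVec ρ σ (ρ.edge i) = if σ (ρ.edge i) = (ρ.v i, ρ.v (i + 1)) then 1 else -1 := by
  have h : ∃ j, ρ.edge j = ρ.edge i := ⟨i, rfl⟩
  rw [cycVec, dif_pos h, ρ.hedge h.choose_spec]

theorem cycVec_of_notMem_range (σ : Fin m → Fin n × Fin n) {e : Fin m}
    (h : e ∉ Set.range ρ.edge) : cycVec ρ σ e = 0 :=
  dif_neg h

variable {σ : Fin m → Fin n × Fin n}

theorem cycVec_eq_ite (hσ : IsOrientation ends σ) (e : Fin m) :
    cycVec ρ σ e = if σ e = ends e then cycVec ρ ends e else -cycVec ρ ends e := by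
  by_cases h : e ∈ Set.range ρ.edge
  · obtain ⟨i, rfl⟩ := h
    have hne := ρ.v_ne_v_add_one i
    rcases hσ (ρ.edge i) with hs | hs <;> rcases ρ.hends i with h' | h' <;>
      simp [cycVec_edge, hs, h', Prod.ext_iff, hne, Ne.symm hne]
  · simp [ρ.cycVec_of_notMem_range _ h]

-- Around the cycle the terms are `q (v (i+1)) - q (v i)`, which telescope.
theorem sum_cycVec_mul_omeas {R : Type*} [CommRing R] (hσ : IsOrientation ends σ)
    (q : Fin n → R) : ∑ e, (cycVec ρ σ e : R) * omeas σ q e = 0 := by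
  have hstep (i : ZMod ρ.k) : (cycVec ρ σ (ρ.edge i) : R) * omeas σ q (ρ.edge i) =
      q (ρ.v (i + 1)) - q (ρ.v i) := by
    have hne := ρ.v_ne_v_add_one i
    rcases hσ (ρ.edge i) with hs | hs <;> rcases ρ.hends i with h' | h' <;>
      simp [cycVec_edge, omeas, hs, h', Prod.ext_iff, hne, Ne.symm hne]
  have : NeZero ρ.k := ⟨by have := ρ.hk; omega⟩
  rw [← Fintype.sum_of_injective ρ.edge ρ.hedge _ _
    (fun e he => by rw [ρ.cycVec_of_notMem_range σ he, Int.cast_zero, zero_mul])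
    (fun _ => rfl)]
  simp only [hstep, Finset.sum_sub_distrib]
  exact sub_eq_zero.mpr (Equiv.sum_comp (Equiv.addRight 1) (fun i => q (ρ.v i)))

end SimpleCycle

section CycleSpace

variable {n m : ℕ} {ends σ : Fin m → Fin n × Fin n}

theorem linearIndependent_cycVec_of_isOrientation {c : ℕ} {ρs : Fin c → SimpleCycle ends}
    (hσ : IsOrientation ends σ)
    (hbasis : LinearIndependent ℝ fun i => castR (cycVec (ρs i) ends)) :
    LinearIndependent ℝ fun i => castR (cycVec (ρs i) σ) := by
  let flip : (Fin m → ℝ) ≃ₗ[ℝ] (Fin m → ℝ) := LinearEquiv.piCongrRight fun e =>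
    if σ e = ends e then LinearEquiv.refl ℝ ℝ else LinearEquiv.neg ℝ
  have hflip : (fun i => castR (cycVec (ρs i) σ)) = flip ∘ fun i => castR (cycVec (ρs i) ends) := by
    funext i e
    by_cases h : σ e = ends e <;> simp [flip, castR, (ρs i).cycVec_eq_ite hσ e, h]
  rw [hflip]
  exact hbasis.map' flip.toLinearMap flip.ker

def omeasLinearMap (σ : Fin m → Fin n × Fin n) (R : Type*) [CommRing R] :
    (Fin n → R) →ₗ[R] Fin m → R :=
  LinearMap.pi fun e =>
    (LinearMap.proj (σ e).2 : (Fin n → R) →ₗ[R] R) - LinearMap.proj (σ e).1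

theorem omeasLinearMap_apply {R : Type*} [CommRing R] (q : Fin n → R) :
    omeasLinearMap σ R q = omeas σ q :=
  rfl

theorem eq_of_omeas_eq_zero {R : Type*} [Ring R] (hconn : IsConn ends)
    (hσ : IsOrientation ends σ) {q : Fin n → R} (hq : omeas σ q = 0) (a b : Fin n) :
    q a = q b := by
  induction hconn a b with
  | refl => rfl
  | tail _ hstep ih =>
    obtain ⟨e, he⟩ := hstep
    have h := sub_eq_zero.mp (congrFun hq e)
    rcases hσ e with hs | hs <;> rcases he with he | he <;>
      simp only [hs, he] at h <;> simp [ih, h]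

def cycleSpace (σ : Fin m → Fin n × Fin n) : Submodule ℝ (Fin m → ℝ) :=
  LinearMap.ker (LinearMap.toMatrix' (omeasLinearMap σ ℝ))ᵀ.mulVecLin

theorem mem_cycleSpace_iff {x : Fin m → ℝ} :
    x ∈ cycleSpace σ ↔ ∀ q, x ⬝ᵥ omeas σ q = 0 := by
  rw [cycleSpace, LinearMap.mem_ker, Matrix.mulVecLin_apply, Matrix.mulVec_transpose,
    ← dotProduct_eq_zero_iff]
  simp only [← Matrix.dotProduct_mulVec, LinearMap.toMatrix'_mulVec, omeasLinearMap_apply]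

theorem finrank_ker_omeasLinearMap_le_one (hconn : IsConn ends) (hσ : IsOrientation ends σ) :
    Module.finrank ℝ (LinearMap.ker (omeasLinearMap σ ℝ)) ≤ 1 := by
  have hker : LinearMap.ker (omeasLinearMap σ ℝ) ≤ ℝ ∙ (fun _ => 1) := by
    intro q hq
    rw [LinearMap.mem_ker, omeasLinearMap_apply] at hq
    rcases isEmpty_or_nonempty (Fin n) with hn | ⟨⟨u⟩⟩
    · exact Subsingleton.elim (0 : Fin n → ℝ) q ▸ Submodule.zero_mem _
    · refine Submodule.mem_span_singleton.mpr ⟨q u, funext fun v => ?_⟩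
      simp [eq_of_omeas_eq_zero hconn hσ hq v u]
  exact (Submodule.finrank_mono hker).trans ((finrank_span_le_card _).trans (by simp))

-- Rank–nullity for `M^σ` and its transpose, with `dim ker M^σ ≤ 1` by connectivity.
theorem finrank_cycleSpace_add_le (hconn : IsConn ends) (hσ : IsOrientation ends σ) :
    Module.finrank ℝ (cycleSpace σ) + n ≤ m + 1 := by
  set M := LinearMap.toMatrix' (omeasLinearMap σ ℝ)
  have hMt := LinearMap.finrank_range_add_finrank_ker Mᵀ.mulVecLin
  have hM := LinearMap.finrank_range_add_finrank_ker (omeasLinearMap σ ℝ)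
  have hrank : Mᵀ.rank = Module.finrank ℝ (LinearMap.range (omeasLinearMap σ ℝ)) := by
    rw [Matrix.rank_transpose, Matrix.rank, ← Matrix.toLin'_apply', Matrix.toLin'_toMatrix']
  rw [Module.finrank_fin_fun] at hMt hM
  have := finrank_ker_omeasLinearMap_le_one hconn hσ
  change Mᵀ.rank + Module.finrank ℝ (cycleSpace σ) = m at hMt
  omega

theorem cycleSpace_eq_span (hconn : IsConn ends) (hσ : IsOrientation ends σ)
    (ρs : Fin (m - n + 1) → SimpleCycle ends)
    (hbasis : LinearIndependent ℝ fun i => castR (cycVec (ρs i) ends)) :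
    cycleSpace σ = Submodule.span ℝ (Set.range fun i => castR (cycVec (ρs i) σ)) := by
  refine (Submodule.eq_of_le_of_finrank_le ?_ ?_).symm
  · rw [Submodule.span_le]
    rintro _ ⟨i, rfl⟩
    exact mem_cycleSpace_iff.mpr fun q => (ρs i).sum_cycVec_mul_omeas hσ q
  · rw [finrank_span_eq_card (linearIndependent_cycVec_of_isOrientation hσ hbasis),
      Fintype.card_fin]
    have := finrank_cycleSpace_add_le hconn hσ
    omega

end CycleSpace

section Lattice

variable {m : ℕ}

theorem last_eq_of_mem_latZ {r : Fin m → ℤ} {x : Fin (m + 1) → ℤ} (hx : x ∈ LatZ r) :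
    x (Fin.last m) = r ⬝ᵥ Fin.init x := by
  induction hx using Submodule.span_induction with
  | mem _ h =>
    obtain ⟨e, rfl⟩ := h
    simp [latCol, Fin.init, dotProduct]
  | zero => simp [Fin.init_def]
  | add x y _ _ hx hy => simp [Fin.init_def, dotProduct, mul_add, Finset.sum_add_distrib, hx, hy]
  | smul a x _ hx => simp [Fin.init_def, dotProduct, hx, Finset.mul_sum, mul_left_comm]

theorem castR_dotProduct (a b : Fin m → ℤ) : castR a ⬝ᵥ castR b = ((a ⬝ᵥ b : ℤ) : ℝ) := by
  simp [castR, dotProduct]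

def hatLinearMap (ε : Fin m → ℤ) : (Fin m → ℝ) →ₗ[ℝ] Fin (m + 1) → ℝ where
  toFun y := Fin.snoc y (castR ε ⬝ᵥ y)
  map_add' y z := by
    ext j
    refine Fin.lastCases ?_ (fun e => ?_) j <;> simp [dotProduct_add]
  map_smul' a y := by
    ext j
    refine Fin.lastCases ?_ (fun e => ?_) j <;> simp [dotProduct_smul]

theorem hatLinearMap_castR (ε y : Fin m → ℤ) :
    hatLinearMap ε (castR y) = castR (Fin.snoc y (ε ⬝ᵥ y)) := by
  ext j
  refine Fin.lastCases ?_ (fun e => ?_) j <;>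
    simp [hatLinearMap, castR_dotProduct, castR]

end Lattice

section Measurement

variable {n m : ℕ} {ends σ : Fin m → Fin n × Fin n}

theorem omeas_castR (p : Fin n → ℤ) : omeas σ (castR p) = castR (omeas σ p) := by
  ext e
  simp [omeas, castR]

theorem configOrient_isOrientation {α : Type*} [LinearOrder α] (p : Fin n → α) :
    IsOrientation ends (configOrient ends p) := by
  intro e
  unfold configOrient
  split_ifs <;> simp

theorem meas_eq_omeas_configOrient {R : Type*} [Ring R] [LinearOrder R] [IsStrictOrderedRing R]
    (p : Fin n → R) : meas ends p = omeas (configOrient ends p) p := by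
  ext e
  unfold meas omeas configOrient
  split_ifs with h
  · exact abs_of_pos (sub_pos.mpr h)
  · rw [abs_sub_comm]
    exact abs_of_nonneg (sub_nonneg.mpr (not_lt.mp h))

theorem init_dotProduct_omeas_of_mem_latZ {ε : Fin m → ℤ} {xhat : Fin (m + 1) → ℤ}
    {p : Fin n → ℤ} (hlat : xhat ∈ LatZ (fun e => omeas σ p e + ε e)) :
    Fin.init xhat ⬝ᵥ omeas σ p = xhat (Fin.last m) - ε ⬝ᵥ Fin.init xhat := by
  rw [last_eq_of_mem_latZ hlat, show (fun e => omeas σ p e + ε e) = omeas σ p + ε from rfl,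
    add_dotProduct, add_sub_cancel_right, dotProduct_comm]

theorem castR_mem_span_hatCycVec (hconn : IsConn ends) (hσ : IsOrientation ends σ)
    (ρs : Fin (m - n + 1) → SimpleCycle ends)
    (hbasis : LinearIndependent ℝ fun i => castR (cycVec (ρs i) ends))
    {ε : Fin m → ℤ} {xhat : Fin (m + 1) → ℤ} {p : Fin n → ℤ}
    (hlat : xhat ∈ LatZ (fun e => omeas σ p e + ε e))
    (hcyc : castR (Fin.init xhat) ∈ cycleSpace σ) :
    castR xhat ∈ Submodule.span ℝ (Set.range fun i => castR (hatCycVec (ρs i) σ ε)) := by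
  have hlast : xhat (Fin.last m) = ε ⬝ᵥ Fin.init xhat := by
    have h := mem_cycleSpace_iff.mp hcyc (castR p)
    rw [omeas_castR, castR_dotProduct, Int.cast_eq_zero,
      init_dotProduct_omeas_of_mem_latZ hlat] at h
    exact sub_eq_zero.mp h
  have hhat : hatLinearMap ε ∘ (fun i => castR (cycVec (ρs i) σ)) =
      fun i => castR (hatCycVec (ρs i) σ ε) :=
    funext fun i => hatLinearMap_castR ε _
  rw [cycleSpace_eq_span hconn hσ ρs hbasis] at hcyc
  have h := Submodule.mem_map_of_mem (f := hatLinearMap ε) hcyc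
  rwa [Submodule.map_span, ← Set.range_comp, hhat, hatLinearMap_castR, ← hlast,
    Fin.snoc_init_self] at h

end Measurement

theorem card_filter_dotProduct_eq_le {K : Type*} [CommRing K] [IsDomain K] [CharZero K]
    [DecidableEq K] {n : ℕ} (s : Finset ℤ) {a : Fin n → K} (ha : a ≠ 0) (C : K) :
    #{p ∈ Fintype.piFinset (fun _ => s) | a ⬝ᵥ (fun u => (p u : K)) = C} ≤ #s ^ (n - 1) := by
  obtain ⟨u₀, hu₀⟩ := Function.ne_iff.mp ha
  calc _ ≤ #(Fintype.piFinset fun _ : {u // u ≠ u₀} => s) := by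
        refine Finset.card_le_card_of_injOn (fun p u => p u) (fun p hp => ?_) ?_
        · simp only [Finset.coe_filter, Fintype.mem_piFinset, Set.mem_ofPred_eq] at hp
          simp [hp.1]
        · intro p hp q hq hpq
          simp only [Finset.coe_filter, Fintype.mem_piFinset, Set.mem_ofPred_eq] at hp hq
          have hoff (u : Fin n) (hu : u ≠ u₀) : p u = q u := congrFun hpq ⟨u, hu⟩
          have hdiff : (fun u => (p u : K)) - (fun u => (q u : K)) =
              Pi.single u₀ ((p u₀ : K) - q u₀) := by
            ext u
            by_cases hu : u = u₀
            · subst hu; simp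
            · simp [hu, hoff u hu]
          have h := congrArg (a ⬝ᵥ ·) hdiff
          simp only [dotProduct_sub, hp.2, hq.2, sub_self, dotProduct_single] at h
          have hu : p u₀ = q u₀ := by
            exact_mod_cast sub_eq_zero.mp ((mul_eq_zero.mp h.symm).resolve_left hu₀)
          funext u
          by_cases h' : u = u₀
          · rw [h', hu]
          · exact hoff u h'
    _ = #s ^ (n - 1) := by simp [Fintype.card_subtype_compl]

section OrderKey

variable {α : Type*} [LinearOrder α] {k : ℕ}

theorem Monotone.lt_iff_exists_castSucc_lt_succ {f : Fin (k + 1) → α} (hf : Monotone f)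
    {a b : Fin (k + 1)} :
    f a < f b ↔ ∃ i : Fin k, a ≤ i.castSucc ∧ i.succ ≤ b ∧ f i.castSucc < f i.succ := by
  refine ⟨fun h => ?_, fun ⟨i, hai, hib, hi⟩ => (hf hai).trans_lt (hi.trans_le (hf hib))⟩
  induction b using Fin.induction with
  | zero => exact absurd h (not_lt.mpr (hf (Fin.zero_le a)))
  | succ i ih =>
    by_cases hi : f a < f i.castSucc
    · obtain ⟨j, haj, hji, hj⟩ := ih hi
      exact ⟨j, haj, hji.trans (Fin.castSucc_le_succ i), hj⟩
    · refine ⟨i, not_lt.mp fun hia => ?_, le_rfl, (not_lt.mp hi).trans_lt h⟩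
      exact (hf (Fin.castSucc_lt_iff_succ_le.mp hia)).not_gt h

def orderKey (p : Fin (k + 1) → α) : Equiv.Perm (Fin (k + 1)) × (Fin k → Bool) :=
  (Tuple.sort p, fun i => decide (p (Tuple.sort p i.castSucc) < p (Tuple.sort p i.succ)))

theorem lt_iff_lt_of_orderKey_eq {p q : Fin (k + 1) → α} (h : orderKey p = orderKey q)
    (a b : Fin (k + 1)) : p a < p b ↔ q a < q b := by
  obtain ⟨hsort, hasc⟩ := Prod.ext_iff.mp h
  simp only [orderKey] at hsort hasc
  have hp := (Tuple.monotone_sort p).lt_iff_exists_castSucc_lt_succ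
    (a := (Tuple.sort p).symm a) (b := (Tuple.sort p).symm b)
  have hq := (Tuple.monotone_sort q).lt_iff_exists_castSucc_lt_succ
    (a := (Tuple.sort p).symm a) (b := (Tuple.sort p).symm b)
  simp only [Function.comp_apply, Equiv.apply_symm_apply] at hp
  rw [← hsort] at hq hasc
  simp only [Function.comp_apply, Equiv.apply_symm_apply] at hq
  rw [hp, hq]
  simp only [funext_iff, decide_eq_decide] at hasc
  simp only [hasc]

theorem configOrient_eq_of_orderKey_eq {m : ℕ} (ends : Fin m → Fin (k + 1) × Fin (k + 1))
    {p q : Fin (k + 1) → α} (h : orderKey p = orderKey q) :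
    configOrient ends p = configOrient ends q :=
  funext fun _ => if_congr (lt_iff_lt_of_orderKey_eq h _ _) rfl rfl

end OrderKey

section Counting

variable {n m : ℕ} {ends : Fin m → Fin n × Fin n}

open Classical in
noncomputable def badConfigs (ends : Fin m → Fin n × Fin n) {c : ℕ} (ρs : Fin c → SimpleCycle ends)
    (ε : Fin m → ℤ) (xhat : Fin (m + 1) → ℤ) (B : ℕ) : Finset (Fin n → ℤ) :=
  {p ∈ Fintype.piFinset fun _ => Icc 1 (B : ℤ) |
    xhat ∈ LatZ (fun e => meas ends p e + ε e) ∧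
    castR xhat ∉ Submodule.span ℝ
      (Set.range fun i => castR (hatCycVec (ρs i) (configOrient ends p) ε))}

theorem card_le_of_configOrient_eq (hconn : IsConn ends) (ρs : Fin (m - n + 1) → SimpleCycle ends)
    (hbasis : LinearIndependent ℝ fun i => castR (cycVec (ρs i) ends)) (ε : Fin m → ℤ)
    (xhat : Fin (m + 1) → ℤ) (B : ℕ) {S : Finset (Fin n → ℤ)}
    (hS : S ⊆ badConfigs ends ρs ε xhat B)
    (hconst : ∀ p ∈ S, ∀ q ∈ S, configOrient ends p = configOrient ends q) :
    #S ≤ B ^ (n - 1) := by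
  rcases S.eq_empty_or_nonempty with rfl | ⟨p₀, hp₀⟩
  · simp
  set σ := configOrient ends p₀
  have hmem (p : Fin n → ℤ) (hp : p ∈ S) : (∀ i, p i ∈ Icc 1 (B : ℤ)) ∧
      xhat ∈ LatZ (fun e => omeas σ p e + ε e) ∧
      castR xhat ∉ Submodule.span ℝ (Set.range fun i => castR (hatCycVec (ρs i) σ ε)) := by
    have h := hS hp
    simp only [badConfigs, mem_filter, Fintype.mem_piFinset] at h
    rwa [meas_eq_omeas_configOrient, hconst p hp p₀ hp₀] at h
  set a := castR (Fin.init xhat) ᵥ* LinearMap.toMatrix' (omeasLinearMap σ ℝ)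
  have ha : a ≠ 0 := fun h => (hmem p₀ hp₀).2.2 <|
    castR_mem_span_hatCycVec hconn (configOrient_isOrientation p₀) ρs hbasis (hmem p₀ hp₀).2.1
      (by rwa [cycleSpace, LinearMap.mem_ker, Matrix.mulVecLin_apply, Matrix.mulVec_transpose])
  have hplane (p : Fin n → ℤ) (hp : p ∈ S) : a ⬝ᵥ (fun u => (p u : ℝ)) =
      ((xhat (Fin.last m) - ε ⬝ᵥ Fin.init xhat : ℤ) : ℝ) := by
    rw [← init_dotProduct_omeas_of_mem_latZ (hmem p hp).2.1, ← castR_dotProduct, ← omeas_castR,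
      ← omeasLinearMap_apply, ← LinearMap.toMatrix'_mulVec, Matrix.dotProduct_mulVec]
    rfl
  calc #S ≤ #{p ∈ Fintype.piFinset (fun _ => Icc 1 (B : ℤ)) |
        a ⬝ᵥ (fun u => (p u : ℝ)) = ((xhat (Fin.last m) - ε ⬝ᵥ Fin.init xhat : ℤ) : ℝ)} :=
      card_le_card fun p hp => mem_filter.mpr ⟨Fintype.mem_piFinset.mpr (hmem p hp).1, hplane p hp⟩
    _ ≤ #(Icc 1 (B : ℤ)) ^ (n - 1) := card_filter_dotProduct_eq_le _ ha _
    _ = B ^ (n - 1) := by simp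

theorem card_badConfigs_le {k : ℕ} {ends : Fin m → Fin (k + 1) × Fin (k + 1)}
    (hconn : IsConn ends) (ρs : Fin (m - (k + 1) + 1) → SimpleCycle ends)
    (hbasis : LinearIndependent ℝ fun i => castR (cycVec (ρs i) ends)) (ε : Fin m → ℤ)
    (xhat : Fin (m + 1) → ℤ) (B : ℕ) :
    #(badConfigs ends ρs ε xhat B) ≤ B ^ k * ((k + 1).factorial * 2 ^ k) := by
  calc _ ≤ B ^ k * #((badConfigs ends ρs ε xhat B).image orderKey) :=
        card_le_mul_card_image _ _ fun _ _ =>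
          card_le_of_configOrient_eq hconn ρs hbasis ε xhat B (filter_subset _ _)
            fun _ hp _ hq => configOrient_eq_of_orderKey_eq ends
              ((mem_filter.mp hp).2.trans (mem_filter.mp hq).2.symm)
    _ ≤ B ^ k * ((k + 1).factorial * 2 ^ k) :=
        Nat.mul_le_mul_left _ ((card_le_univ _).trans_eq (by simp [Fintype.card_perm]))

end Counting

theorem stmt16_general (n m : ℕ) (hn : 2 ≤ n) (ends : Fin m → Fin n × Fin n)
    (hconn : IsConn ends)
    (ρs : Fin (m - n + 1) → SimpleCycle ends)
    (hbasis : LinearIndependent ℝ fun i => castR (cycVec (ρs i) ends))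
    (ε : Fin m → ℤ) (xhat : Fin (m + 1) → ℤ) (B : ℕ) :
    (Nat.card {p : Fin n → ℤ //
        (∀ i, 1 ≤ p i ∧ p i ≤ (B : ℤ)) ∧
        xhat ∈ LatZ (fun e => meas ends p e + ε e) ∧
        castR xhat ∉ Submodule.span ℝ
          (Set.range fun i => castR (hatCycVec (ρs i) (configOrient ends p) ε))} : ℝ) /
        (B : ℝ) ^ n ≤
      2 ^ n * Nat.factorial n / B := by
  obtain ⟨k, rfl⟩ : ∃ k, n = k + 1 := ⟨n - 1, by omega⟩
  rw [Nat.card_congr (Equiv.subtypeEquivRight (q := (· ∈ badConfigs ends ρs ε xhat B)) fun p => by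
    simp [badConfigs, Fintype.mem_piFinset]), Nat.card_eq_finsetCard]
  rcases Nat.eq_zero_or_pos B with rfl | hB
  · simp
  have hle : (#(badConfigs ends ρs ε xhat B) : ℝ) ≤ B ^ k * ((k + 1).factorial * 2 ^ k) := by
    exact_mod_cast card_badConfigs_le hconn ρs hbasis ε xhat B
  rw [div_le_div_iff₀ (by positivity) (by exact_mod_cast hB)]
  calc (#(badConfigs ends ρs ε xhat B) : ℝ) * B
      ≤ B ^ k * ((k + 1).factorial * 2 ^ k) * B := by gcongr
    _ = 2 ^ k * (k + 1).factorial * B ^ (k + 1) := by ring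
    _ ≤ 2 ^ (k + 1) * (k + 1).factorial * B ^ (k + 1) := by gcongr <;> norm_num

/-- for `p` uniform in `{1,…,B}^n`, the probability that
`x̂ ∈ LatZ(ℓ(p) + ε)` and `x̂` is not in the real span of the hatted cycle vectors
(formed w.r.t. `σ_p`) is at most `2^n · n! / B`. -/
theorem stmt16 (n m : ℕ) (hn : 2 ≤ n) (ends : Fin m → Fin n × Fin n) (hG : IsSimple ends)
    (hconn : IsConn ends)
    (ρs : Fin (m - n + 1) → SimpleCycle ends)
    (hbasis : LinearIndependent ℝ fun i => castR (cycVec (ρs i) ends))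
    (ε : Fin m → ℤ) (hε : SmallVec ε) (xhat : Fin (m + 1) → ℤ) (B : ℕ) (hB : 2 ≤ B) :
    (Nat.card {p : Fin n → ℤ //
        (∀ i, 1 ≤ p i ∧ p i ≤ (B : ℤ)) ∧
        xhat ∈ LatZ (fun e => meas ends p e + ε e) ∧
        castR xhat ∉ Submodule.span ℝ
          (Set.range fun i => castR (hatCycVec (ρs i) (configOrient ends p) ε))} : ℝ) /
        (B : ℝ) ^ n ≤
      2 ^ n * Nat.factorial n / B :=
  stmt16_general n m hn ends hconn ρs hbasis ε xhat B
end
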